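/- Fix q ∈ (0,1). For τ ∈ {fwd, bwd} let v₀,τ, v₁,τ > 0 and define L_fix(τ) = -(1/2)·log((1-q)·v₀,τ + q·v₁,τ) and L_inc(τ) = -(1/2)·[(1-q)·log v₀,τ + q·log v₁,τ]. Set Δ_fix = L_fix(fwd) - L_fix(bwd) and Δ_inc = L_inc(fwd) - L_inc(bwd), and let R_τ = v₁,τ/v₀,τ. If R_fwd > 1 and R_bwd > 1, then Δ_inc > Δ_fix if and only if R_fwd > R_bwd. -/

import Mathlib

/-!
Factoring `v₀` out of the mixture, `L_inc(τ) - L_fix(τ)` depends only on `R_τ = v₁,τ / v₀,τ`: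
it is half the Jensen gap `G q R = log ((1 - q) + q R) - q log R` of the logarithm at the
points `1` and `R`. Hence `Δ_inc - Δ_fix = (G q R_fwd - G q R_bwd) / 2`, and `G q` is strictly
increasing on `[1, ∞)` since its derivative `q / ((1 - q) + q R) - q / R` is positive for `R > 1`.
-/

open Real Set

noncomputable def logJensenGap (q R : ℝ) : ℝ :=
  log ((1 - q) + q * R) - q * log R

theorem log_mix_sub_mix_log_eq_logJensenGap {q v₀ v₁ : ℝ} (hv₀ : v₀ ≠ 0) (hv₁ : v₁ ≠ 0)
    (hmix : (1 - q) * v₀ + q * v₁ ≠ 0) :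
    log ((1 - q) * v₀ + q * v₁) - ((1 - q) * log v₀ + q * log v₁) =
      logJensenGap q (v₁ / v₀) := by
  have hfactor : (1 - q) * v₀ + q * v₁ = v₀ * ((1 - q) + q * (v₁ / v₀)) := by
    field_simp
  have hR : (1 - q) + q * (v₁ / v₀) ≠ 0 := by
    rintro h
    exact hmix (by rw [hfactor, h, mul_zero])
  rw [logJensenGap, hfactor, log_mul hv₀ hR, log_div hv₁ hv₀]
  ring

theorem hasDerivAt_logJensenGap {q x : ℝ} (hx : x ≠ 0) (hmix : (1 - q) + q * x ≠ 0) :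
    HasDerivAt (logJensenGap q) (q / ((1 - q) + q * x) - q / x) x := by
  have hlin : HasDerivAt (fun R => (1 - q) + q * R) q x := by
    simpa using ((hasDerivAt_id x).const_mul q).const_add (1 - q)
  rw [div_eq_mul_inv, div_eq_mul_inv]
  exact (hlin.log hmix).sub ((hasDerivAt_log hx).const_mul q)

theorem logJensenGap_strictMonoOn {q : ℝ} (hq₀ : 0 < q) (hq₁ : q < 1) :
    StrictMonoOn (logJensenGap q) (Ici 1) := by
  have hderiv : ∀ x ∈ Ici (1 : ℝ),
      HasDerivAt (logJensenGap q) (q / ((1 - q) + q * x) - q / x) x := fun x (hx : 1 ≤ x) =>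
    hasDerivAt_logJensenGap (by positivity) (by nlinarith)
  refine strictMonoOn_of_hasDerivWithinAt_pos (convex_Ici 1)
    (fun x hx => (hderiv x hx).continuousAt.continuousWithinAt)
    (fun x hx => (hderiv x (interior_subset hx)).hasDerivWithinAt) fun x hx => ?_
  rw [interior_Ici] at hx
  have hx₁ : 1 < x := hx
  have hmix_pos : 0 < (1 - q) + q * x := by nlinarith
  have hmix_lt : (1 - q) + q * x < x := by nlinarith
  exact sub_pos.mpr (div_lt_div_of_pos_left hq₀ hmix_pos hmix_lt)

theorem missingness_amplification (q v0f v1f v0b v1b : ℝ)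
    (hq0 : 0 < q) (hq1 : q < 1)
    (hv0f : 0 < v0f) (hv1f : 0 < v1f) (hv0b : 0 < v0b) (hv1b : 0 < v1b)
    (hRf : 1 < v1f / v0f) (hRb : 1 < v1b / v0b) :
    (-(1 / 2) * ((1 - q) * Real.log v0f + q * Real.log v1f)
        - (-(1 / 2) * ((1 - q) * Real.log v0b + q * Real.log v1b))
      > -(1 / 2) * Real.log ((1 - q) * v0f + q * v1f)
        - (-(1 / 2) * Real.log ((1 - q) * v0b + q * v1b)))
    ↔ v1f / v0f > v1b / v0b := by
  have hgap_f := log_mix_sub_mix_log_eq_logJensenGap (q := q) hv0f.ne' hv1f.ne'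
    (by nlinarith)
  have hgap_b := log_mix_sub_mix_log_eq_logJensenGap (q := q) hv0b.ne' hv1b.ne'
    (by nlinarith)
  rw [gt_iff_lt, gt_iff_lt, ← (logJensenGap_strictMonoOn hq0 hq1).lt_iff_lt hRb.le hRf.le]
  constructor <;> intro h <;> linarith
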